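/- arXiv:1508.01610 — 2 statements merged into one kernel-verified Lean document; each statement's English description precedes it below -/
import Mathlib

section
/- Let p be a prime and K a field of characteristic p. Suppose V ⊆ K[[q]] is a K-subspace with the property that any element of V whose q-expansion vanishes to order greater than b is zero. Then any element of V ⊗_K V ⊆ K[[q1, q2]] all of whose coefficients a(m,n) with m, n ≤ b vanish is zero. -/
open PowerSeries

/-- The index `(m, n)` as an exponent for `K[[q₁, q₂]] = MvPowerSeries (Fin 2) K`. -/
noncomputable def idx (m n : ℕ) : Fin 2 →₀ ℕ := Finsupp.single 0 m + Finsupp.single 1 n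

/-!
Write `F = ∑ cᵢ fᵢ(q₁) gᵢ(q₂)`. For each `n`, the coefficient of `q₂ⁿ` in `F` is the series
`∑ cᵢ gᵢ,ₙ fᵢ ∈ V`; for `n ≤ b` its first `b + 1` coefficients vanish, so it is zero. Hence for
each `m` the coefficient of `q₁ᵐ`, the series `∑ cᵢ fᵢ,ₘ gᵢ ∈ V`, also has its first `b + 1`
coefficients zero, so it vanishes as well, and `F = 0`.
-/

namespace MvPowerSeries

variable {R : Type*} [CommSemiring R]

lemma eq_zero_of_coeff_idx {F : MvPowerSeries (Fin 2) R}
    (hF : ∀ m n : ℕ, coeff (idx m n) F = 0) : F = 0 := by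
  ext d
  have hd : d = idx (d 0) (d 1) := by
    ext i
    fin_cases i <;> simp [idx]
  rw [map_zero, hd]
  exact hF (d 0) (d 1)

/-- The coefficient of `q₂ ^ n` in `F(q₁, q₂)`, as a power series in `q₁`. -/
noncomputable def coeffSnd (n : ℕ) : MvPowerSeries (Fin 2) R →ₗ[R] R⟦X⟧ where
  toFun F := PowerSeries.mk fun m => coeff (idx m n) F
  map_add' F G := by ext; simp
  map_smul' c F := by ext; simp

/-- The coefficient of `q₁ ^ m` in `F(q₁, q₂)`, as a power series in `q₂`. -/
noncomputable def coeffFst (m : ℕ) : MvPowerSeries (Fin 2) R →ₗ[R] R⟦X⟧ where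
  toFun F := PowerSeries.mk fun n => coeff (idx m n) F
  map_add' F G := by ext; simp
  map_smul' c F := by ext; simp

@[simp]
lemma coeff_coeffSnd (m n : ℕ) (F : MvPowerSeries (Fin 2) R) :
    PowerSeries.coeff m (coeffSnd n F) = coeff (idx m n) F := by
  simp [coeffSnd]

@[simp]
lemma coeff_coeffFst (m n : ℕ) (F : MvPowerSeries (Fin 2) R) :
    PowerSeries.coeff n (coeffFst m F) = coeff (idx m n) F := by
  simp [coeffFst]

/-- The series `f(q₁) g(q₂)` with `f ∈ V`, `g ∈ W`; their span is the image of `V ⊗ W`. -/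
def pureTensors (V W : Submodule R R⟦X⟧) : Set (MvPowerSeries (Fin 2) R) :=
  {H | ∃ f ∈ V, ∃ g ∈ W, ∀ m n : ℕ,
    coeff (idx m n) H = PowerSeries.coeff m f * PowerSeries.coeff n g}

variable {V W : Submodule R R⟦X⟧} {F : MvPowerSeries (Fin 2) R}

lemma coeffSnd_mem_of_mem_span (hF : F ∈ Submodule.span R (pureTensors V W)) (n : ℕ) :
    coeffSnd n F ∈ V := by
  refine (Submodule.span_le (p := V.comap (coeffSnd n))).mpr ?_ hF
  rintro H ⟨f, hf, g, -, hH⟩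
  have : coeffSnd n H = PowerSeries.coeff n g • f := by
    ext m
    simp [hH, mul_comm]
  simpa [this] using V.smul_mem _ hf

lemma coeffFst_mem_of_mem_span (hF : F ∈ Submodule.span R (pureTensors V W)) (m : ℕ) :
    coeffFst m F ∈ W := by
  refine (Submodule.span_le (p := W.comap (coeffFst m))).mpr ?_ hF
  rintro H ⟨f, -, g, hg, hH⟩
  have : coeffFst m H = PowerSeries.coeff m f • g := by
    ext n
    simp [hH]
  simpa [this] using W.smul_mem _ hg

end MvPowerSeries

theorem tensor_sturm_abstract_general
    (K : Type*) [Field K] (b : ℕ)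
    (V : Submodule K (PowerSeries K))
    (hV : ∀ f ∈ V, (∀ n : ℕ, n ≤ b → PowerSeries.coeff n f = 0) → f = 0)
    (F : MvPowerSeries (Fin 2) K)
    (hF : F ∈ Submodule.span K
      {H : MvPowerSeries (Fin 2) K | ∃ f ∈ V, ∃ g ∈ V,
        ∀ m n : ℕ, MvPowerSeries.coeff (idx m n) H =
          PowerSeries.coeff m f * PowerSeries.coeff n g})
    (hvan : ∀ m n : ℕ, m ≤ b → n ≤ b → MvPowerSeries.coeff (idx m n) F = 0) :
    F = 0 := by
  have hF : F ∈ Submodule.span K (MvPowerSeries.pureTensors V V) := hF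
  have hsnd : ∀ n ≤ b, MvPowerSeries.coeffSnd n F = 0 := fun n hn =>
    hV _ (MvPowerSeries.coeffSnd_mem_of_mem_span hF n) fun m hm => by
      rw [MvPowerSeries.coeff_coeffSnd]
      exact hvan m n hm hn
  have hfst : ∀ m, MvPowerSeries.coeffFst m F = 0 := fun m =>
    hV _ (MvPowerSeries.coeffFst_mem_of_mem_span hF m) fun n hn => by
      rw [MvPowerSeries.coeff_coeffFst, ← MvPowerSeries.coeff_coeffSnd, hsnd n hn, map_zero]
  refine MvPowerSeries.eq_zero_of_coeff_idx fun m n => ?_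
  rw [← MvPowerSeries.coeff_coeffFst, hfst m, map_zero]

/-- Let `p` be a prime and `K` a field of characteristic `p`.
Suppose `V ⊆ K[[q]]` is a `K`-subspace such that any element of `V` whose `q`-expansion
vanishes to order greater than `b` is zero.  Then any element of `V ⊗_K V ⊆ K[[q₁, q₂]]`
all of whose coefficients `a(m, n)` with `m, n ≤ b` vanish is zero. -/
theorem tensor_sturm_abstract
    (p : ℕ) (hp : p.Prime) (K : Type*) [Field K] [CharP K p] (b : ℕ)
    (V : Submodule K (PowerSeries K))
    (hV : ∀ f ∈ V, (∀ n : ℕ, n ≤ b → PowerSeries.coeff n f = 0) → f = 0)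
    (F : MvPowerSeries (Fin 2) K)
    (hF : F ∈ Submodule.span K
      {H : MvPowerSeries (Fin 2) K | ∃ f ∈ V, ∃ g ∈ V,
        ∀ m n : ℕ, MvPowerSeries.coeff (idx m n) H =
          PowerSeries.coeff m f * PowerSeries.coeff n g})
    (hvan : ∀ m n : ℕ, m ≤ b → n ≤ b → MvPowerSeries.coeff (idx m n) F = 0) :
    F = 0 :=
  tensor_sturm_abstract_general K b V hV F hF hvan
end

section
/- The monomials x12^i y12^j, for x12 = Δ ⊗ Δ and y12 = e4^3 ⊗ Δ + Δ ⊗ e4^3 reduced modulo a prime p, are F_p-linearly independent: the reductions of x12 and y12 are algebraically independent over F_p. Equivalently, the leading term (in the order q1^m q12^r q2^n ordered lexicographically in (m,n,r)) of x12^i y12^j is q1^i q2^{i+j}. -/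
/-!
Reduced mod `p`, `Δ = q + O(q²)` (from `1728 Δ = e₄³ - e₆²`) and `E = e₄³ = 1 + O(q)`. By the
binomial theorem `x₁₂^i y₁₂^j = ∑_{a+b=j} C(j,a) (Δ^{i+b} E^a) ⊗ (Δ^{i+a} E^b)`, and the
`(a, b)` term is divisible by `q₁^{i+b} q₂^{i+a}`. Hence every coefficient of `x₁₂^i y₁₂^j`
lexicographically below `q₁^i q₂^{i+j}` vanishes, and at `q₁^i q₂^{i+j}` only `a = j` contributes,
with coefficient `1`. Distinct monomials have distinct leading exponents `(i, i + j)`, so in a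
nonzero polynomial relation the lex-least leading exponent in its support would carry a nonzero
coefficient.
-/

open PowerSeries ArithmeticFunction

/-- The image of `f ⊗ g` in `K[[q₁, q₂]]` under `q ⊗ 1 ↦ q₁`, `1 ⊗ q ↦ q₂`. -/
noncomputable def twoVar {K : Type*} [CommSemiring K] (f g : PowerSeries K) :
    MvPowerSeries (Fin 2) K :=
  fun d => PowerSeries.coeff (d 0) f * PowerSeries.coeff (d 1) g

open Finset

namespace PowerSeries

variable {R : Type*} [CommSemiring R]

theorem constantCoeff_map {S : Type*} [CommSemiring S] (f : R →+* S) (φ : R⟦X⟧) :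
    constantCoeff (map f φ) = f (constantCoeff φ) := by
  rw [← coeff_zero_eq_constantCoeff_apply, coeff_map, coeff_zero_eq_constantCoeff_apply]

theorem coeff_pow_mul_of_lt {f : R⟦X⟧} (hf : constantCoeff f = 0) (g : R⟦X⟧) {a m : ℕ}
    (hm : m < a) : coeff m (f ^ a * g) = 0 :=
  X_pow_dvd_iff.mp ((pow_dvd_pow_of_dvd (X_dvd_iff.mpr hf) a).mul_right g) m hm

theorem coeff_pow_mul_self {f : R⟦X⟧} (hf : constantCoeff f = 0) (g : R⟦X⟧) (a : ℕ) :
    coeff a (f ^ a * g) = coeff 1 f ^ a * constantCoeff g := by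
  obtain ⟨u, rfl⟩ := X_dvd_iff.mpr hf
  rw [mul_pow, mul_assoc, coeff_X_pow_mul', if_pos le_rfl, Nat.sub_self,
    coeff_zero_eq_constantCoeff_apply, map_mul, map_pow, ← coeff_zero_eq_constantCoeff_apply,
    ← coeff_succ_X_mul]

end PowerSeries

section TwoVar

variable {R : Type*} [CommSemiring R]

@[simp] lemma idx_apply_zero (m n : ℕ) : idx m n 0 = m := by simp [idx]

@[simp] lemma idx_apply_one (m n : ℕ) : idx m n 1 = n := by simp [idx]

lemma idx_apply_self (u : Fin 2 →₀ ℕ) : idx (u 0) (u 1) = u := by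
  ext i
  fin_cases i <;> simp

lemma coeff_twoVar (f g : R⟦X⟧) (d : Fin 2 →₀ ℕ) :
    MvPowerSeries.coeff d (twoVar f g) = coeff (d 0) f * coeff (d 1) g := rfl

lemma twoVar_one : twoVar (1 : R⟦X⟧) 1 = 1 := by
  ext d
  simp only [coeff_twoVar, MvPowerSeries.coeff_one, coeff_one, ite_zero_mul_ite_zero, mul_one,
    Finsupp.ext_iff, Fin.forall_fin_two, Finsupp.coe_zero, Pi.zero_apply]

lemma twoVar_mul (f g f' g' : R⟦X⟧) : twoVar f g * twoVar f' g' = twoVar (f * f') (g * g') := by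
  ext d
  rw [MvPowerSeries.coeff_mul, coeff_twoVar, coeff_mul, coeff_mul, sum_mul_sum,
    ← sum_product']
  refine sum_nbij' (fun uv => ((uv.1 0, uv.2 0), (uv.1 1, uv.2 1)))
    (fun ab => (idx ab.1.1 ab.2.1, idx ab.1.2 ab.2.2)) ?_ ?_ ?_ ?_ ?_
  · rintro ⟨u, v⟩ h
    simp [← (HasAntidiagonal.mem_antidiagonal.mp h)]
  · rintro ⟨⟨a, b⟩, ⟨c, e⟩⟩ h
    simp only [mem_product, HasAntidiagonal.mem_antidiagonal] at h ⊢
    ext i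
    fin_cases i <;> simp [idx, h.1, h.2]
  · rintro ⟨u, v⟩ _
    simp [idx_apply_self]
  · rintro ⟨⟨a, b⟩, ⟨c, e⟩⟩ _
    simp
  · rintro ⟨u, v⟩ _
    simp only [coeff_twoVar]
    ring

lemma twoVar_pow (f g : R⟦X⟧) (n : ℕ) : twoVar f g ^ n = twoVar (f ^ n) (g ^ n) := by
  induction n with
  | zero => exact twoVar_one.symm
  | succ n ih => rw [pow_succ, pow_succ, pow_succ, ih, twoVar_mul]

end TwoVar

section LeadingTerm

variable {R : Type*} [CommSemiring R] {Δ E : R⟦X⟧}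

lemma coeff_twoVar_pow_mul_pow (i j : ℕ) (d : Fin 2 →₀ ℕ) :
    MvPowerSeries.coeff d (twoVar Δ Δ ^ i * (twoVar E Δ + twoVar Δ E) ^ j) =
      ∑ ab ∈ antidiagonal j, j.choose ab.1 •
        (coeff (d 0) (Δ ^ (i + ab.2) * E ^ ab.1) * coeff (d 1) (Δ ^ (i + ab.1) * E ^ ab.2)) := by
  rw [(Commute.all _ _).add_pow', mul_sum, map_sum]
  refine sum_congr rfl fun ab _ => ?_
  simp only [mul_smul_comm, map_nsmul, twoVar_pow, twoVar_mul, coeff_twoVar]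
  congr 3 <;> ring

lemma coeff_idx_twoVar_pow_mul_pow_of_lt (hΔ : constantCoeff Δ = 0) {i j m n : ℕ}
    (h : m < i ∨ m = i ∧ n < i + j) :
    MvPowerSeries.coeff (idx m n) (twoVar Δ Δ ^ i * (twoVar E Δ + twoVar Δ E) ^ j) = 0 := by
  rw [coeff_twoVar_pow_mul_pow]
  refine sum_eq_zero fun ab hab => ?_
  rw [HasAntidiagonal.mem_antidiagonal] at hab
  rw [idx_apply_zero, idx_apply_one]
  by_cases hfst : m < i + ab.2
  · rw [coeff_pow_mul_of_lt hΔ _ hfst, zero_mul, smul_zero]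
  · rw [coeff_pow_mul_of_lt hΔ _ (by omega : n < i + ab.1), mul_zero, smul_zero]

lemma coeff_idx_twoVar_pow_mul_pow_self (hΔ : constantCoeff Δ = 0) (i j : ℕ) :
    MvPowerSeries.coeff (idx i (i + j)) (twoVar Δ Δ ^ i * (twoVar E Δ + twoVar Δ E) ^ j) =
      coeff 1 Δ ^ (2 * i + j) * constantCoeff E ^ j := by
  rw [coeff_twoVar_pow_mul_pow, sum_eq_single_of_mem (j, 0) (by simp)]
  · rw [idx_apply_zero, idx_apply_one, Nat.choose_self, one_smul, add_zero, pow_zero, mul_one,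
      ← mul_one (Δ ^ (i + j)), coeff_pow_mul_self hΔ, coeff_pow_mul_self hΔ, map_one, map_pow]
    ring
  · rintro ⟨a, b⟩ hab hne
    rw [HasAntidiagonal.mem_antidiagonal] at hab
    have hb : 0 < b := by
      by_contra! hb
      exact hne (by simp only [Prod.mk.injEq]; omega)
    rw [idx_apply_zero, coeff_pow_mul_of_lt hΔ _ (by omega), zero_mul, smul_zero]

end LeadingTerm

theorem algebraicIndependent_of_leadingExponent {R A σ T : Type*} [CommRing R] [CommRing A]
    [Algebra R A] [LinearOrder T] (v : σ → A) (lead : (σ →₀ ℕ) → T)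
    (hlead : Function.Injective lead) (φ : T → A →ₗ[R] R)
    (h_self : ∀ e, φ (lead e) (e.prod fun i k => v i ^ k) = 1)
    (h_lt : ∀ d e, lead d < lead e → φ (lead d) (e.prod fun i k => v i ^ k) = 0) :
    AlgebraicIndependent R v := by
  rw [algebraicIndependent_iff]
  intro P hP
  by_contra hP0
  obtain ⟨d, hd, hmin⟩ :=
    exists_min_image P.support lead (MvPolynomial.support_nonempty.mpr hP0)
  have hφ : φ (lead d) (MvPolynomial.aeval v P) = P.coeff d := by
    conv_lhs => rw [P.as_sum]
    rw [map_sum, map_sum, sum_eq_single_of_mem d hd]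
    · rw [MvPolynomial.aeval_monomial, ← Algebra.smul_def, map_smul, h_self, smul_eq_mul,
        mul_one]
    · intro e he hne
      have hlt : lead d < lead e := (hmin e he).lt_of_ne (hlead.ne hne.symm)
      rw [MvPolynomial.aeval_monomial, ← Algebra.smul_def, map_smul, h_lt d e hlt, smul_zero]
  rw [hP, _root_.map_zero] at hφ
  exact MvPolynomial.mem_support_iff.mp hd hφ.symm

theorem algebraicIndependent_twoVar {R : Type*} [CommRing R] {Δ E : R⟦X⟧}
    (hΔ0 : constantCoeff Δ = 0) (hΔ1 : coeff 1 Δ = 1) (hE : constantCoeff E = 1) :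
    AlgebraicIndependent R ![twoVar Δ Δ, twoVar E Δ + twoVar Δ E] := by
  have hprod (e : Fin 2 →₀ ℕ) : (e.prod fun i k => ![twoVar Δ Δ, twoVar E Δ + twoVar Δ E] i ^ k)
      = twoVar Δ Δ ^ e 0 * (twoVar E Δ + twoVar Δ E) ^ e 1 := by
    rw [Finsupp.prod_fintype _ _ (fun _ => pow_zero _), Fin.prod_univ_two]
    rfl
  refine algebraicIndependent_of_leadingExponent _ (fun e => toLex (e 0, e 0 + e 1)) ?_
    (fun t => MvPowerSeries.coeff (idx (ofLex t).1 (ofLex t).2)) (fun e => ?_)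
    (fun d e h => ?_)
  · intro d e h
    simp only [toLex_inj, Prod.mk.injEq] at h
    ext i
    fin_cases i <;> simp <;> omega
  · simp [hprod, coeff_idx_twoVar_pow_mul_pow_self hΔ0, hΔ1, hE]
  · rw [hprod]
    refine coeff_idx_twoVar_pow_mul_pow_of_lt hΔ0 ?_
    simpa [Prod.Lex.toLex_lt_toLex] using h

lemma constantCoeff_eq_zero_and_coeff_one_eq_one_of_eisenstein {E4 E6 Δ : ℤ⟦X⟧}
    (hE4 : ∀ n : ℕ, coeff n E4 = if n = 0 then 1 else 240 * (sigma 3 n : ℤ))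
    (hE6 : ∀ n : ℕ, coeff n E6 = if n = 0 then 1 else -504 * (sigma 5 n : ℤ))
    (hΔ : map (Int.castRingHom ℚ) Δ = ((2 : ℚ) ^ 6 * 3 ^ 3)⁻¹ •
      ((map (Int.castRingHom ℚ) E4) ^ 3 - (map (Int.castRingHom ℚ) E6) ^ 2)) :
    constantCoeff Δ = 0 ∧ coeff 1 Δ = 1 := by
  have hq (n : ℕ) : ((coeff n Δ : ℤ) : ℚ) = ((2 : ℚ) ^ 6 * 3 ^ 3)⁻¹ *
      (coeff n (map (Int.castRingHom ℚ) E4 ^ 3) - coeff n (map (Int.castRingHom ℚ) E6 ^ 2)) := by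
    simpa using congr_arg (coeff n) hΔ
  have c40 : constantCoeff (map (Int.castRingHom ℚ) E4) = 1 := by
    rw [constantCoeff_map, (by simpa using hE4 0 : constantCoeff E4 = 1), map_one]
  have c60 : constantCoeff (map (Int.castRingHom ℚ) E6) = 1 := by
    rw [constantCoeff_map, (by simpa using hE6 0 : constantCoeff E6 = 1), map_one]
  have c41 : coeff 1 (map (Int.castRingHom ℚ) E4) = 240 := by simp [hE4, sigma_apply]
  have c61 : coeff 1 (map (Int.castRingHom ℚ) E6) = -504 := by simp [hE6, sigma_apply]
  constructor
  · have h := hq 0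
    simp only [coeff_zero_eq_constantCoeff_apply, map_pow, c40, c60] at h
    norm_num at h
    exact_mod_cast h
  · have h := hq 1
    rw [coeff_one_pow, coeff_one_pow, c40, c60, c41, c61] at h
    norm_num at h
    exact_mod_cast h

theorem x12_y12_algebraically_independent_general
    (p : ℕ)
    (E4 E6 Δ : PowerSeries ℤ)
    (hE4 : ∀ n : ℕ, PowerSeries.coeff n E4 =
      if n = 0 then 1 else 240 * (ArithmeticFunction.sigma 3 n : ℤ))
    (hE6 : ∀ n : ℕ, PowerSeries.coeff n E6 =
      if n = 0 then 1 else -504 * (ArithmeticFunction.sigma 5 n : ℤ))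
    (hΔ : PowerSeries.map (Int.castRingHom ℚ) Δ =
      ((2 : ℚ)^6 * 3^3)⁻¹ • ((PowerSeries.map (Int.castRingHom ℚ) E4) ^ 3 -
        (PowerSeries.map (Int.castRingHom ℚ) E6) ^ 2)) :
    AlgebraicIndependent (ZMod p)
      ![twoVar (PowerSeries.map (Int.castRingHom (ZMod p)) Δ)
          (PowerSeries.map (Int.castRingHom (ZMod p)) Δ),
        twoVar (PowerSeries.map (Int.castRingHom (ZMod p)) (E4 ^ 3))
          (PowerSeries.map (Int.castRingHom (ZMod p)) Δ) +
        twoVar (PowerSeries.map (Int.castRingHom (ZMod p)) Δ)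
          (PowerSeries.map (Int.castRingHom (ZMod p)) (E4 ^ 3))] ∧
    ∀ i j : ℕ,
      MvPowerSeries.coeff (idx i (i + j))
        ((twoVar (PowerSeries.map (Int.castRingHom (ZMod p)) Δ)
            (PowerSeries.map (Int.castRingHom (ZMod p)) Δ)) ^ i *
          (twoVar (PowerSeries.map (Int.castRingHom (ZMod p)) (E4 ^ 3))
              (PowerSeries.map (Int.castRingHom (ZMod p)) Δ) +
            twoVar (PowerSeries.map (Int.castRingHom (ZMod p)) Δ)
              (PowerSeries.map (Int.castRingHom (ZMod p)) (E4 ^ 3))) ^ j) = 1 ∧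
      ∀ m n : ℕ, (m < i ∨ (m = i ∧ n < i + j)) →
        MvPowerSeries.coeff (idx m n)
          ((twoVar (PowerSeries.map (Int.castRingHom (ZMod p)) Δ)
              (PowerSeries.map (Int.castRingHom (ZMod p)) Δ)) ^ i *
            (twoVar (PowerSeries.map (Int.castRingHom (ZMod p)) (E4 ^ 3))
                (PowerSeries.map (Int.castRingHom (ZMod p)) Δ) +
              twoVar (PowerSeries.map (Int.castRingHom (ZMod p)) Δ)
                (PowerSeries.map (Int.castRingHom (ZMod p)) (E4 ^ 3))) ^ j) = 0 := by
  obtain ⟨hΔ0, hΔ1⟩ := constantCoeff_eq_zero_and_coeff_one_eq_one_of_eisenstein hE4 hE6 hΔ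
  have hE4_0 : constantCoeff E4 = 1 := by simpa using hE4 0
  have h0 : constantCoeff (map (Int.castRingHom (ZMod p)) Δ) = 0 := by
    rw [constantCoeff_map, hΔ0, _root_.map_zero]
  have h1 : coeff 1 (map (Int.castRingHom (ZMod p)) Δ) = 1 := by simp [hΔ1]
  have hE : constantCoeff (map (Int.castRingHom (ZMod p)) (E4 ^ 3)) = 1 := by
    rw [constantCoeff_map, map_pow, hE4_0, one_pow, map_one]
  refine ⟨algebraicIndependent_twoVar h0 h1 hE, fun i j => ⟨?_, fun m n h =>
    coeff_idx_twoVar_pow_mul_pow_of_lt h0 h⟩⟩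
  rw [coeff_idx_twoVar_pow_mul_pow_self h0, h1, hE, one_pow, one_pow, one_mul]

/-- The reductions mod a prime `p` of `x₁₂ = Δ ⊗ Δ` and
`y₁₂ = e₄³ ⊗ Δ + Δ ⊗ e₄³` are algebraically independent over `𝔽_p`; equivalently, the
leading term of `x₁₂^i y₁₂^j` (in the lexicographic order on `(m, n)`) is `q₁^i q₂^{i+j}`. -/
theorem x12_y12_algebraically_independent
    (p : ℕ) (hp : p.Prime)
    (E4 E6 Δ : PowerSeries ℤ)
    (hE4 : ∀ n : ℕ, PowerSeries.coeff n E4 =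
      if n = 0 then 1 else 240 * (ArithmeticFunction.sigma 3 n : ℤ))
    (hE6 : ∀ n : ℕ, PowerSeries.coeff n E6 =
      if n = 0 then 1 else -504 * (ArithmeticFunction.sigma 5 n : ℤ))
    (hΔ : PowerSeries.map (Int.castRingHom ℚ) Δ =
      ((2 : ℚ)^6 * 3^3)⁻¹ • ((PowerSeries.map (Int.castRingHom ℚ) E4) ^ 3 -
        (PowerSeries.map (Int.castRingHom ℚ) E6) ^ 2)) :
    AlgebraicIndependent (ZMod p)
      ![twoVar (PowerSeries.map (Int.castRingHom (ZMod p)) Δ)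
          (PowerSeries.map (Int.castRingHom (ZMod p)) Δ),
        twoVar (PowerSeries.map (Int.castRingHom (ZMod p)) (E4 ^ 3))
          (PowerSeries.map (Int.castRingHom (ZMod p)) Δ) +
        twoVar (PowerSeries.map (Int.castRingHom (ZMod p)) Δ)
          (PowerSeries.map (Int.castRingHom (ZMod p)) (E4 ^ 3))] ∧
    ∀ i j : ℕ,
      MvPowerSeries.coeff (idx i (i + j))
        ((twoVar (PowerSeries.map (Int.castRingHom (ZMod p)) Δ)
            (PowerSeries.map (Int.castRingHom (ZMod p)) Δ)) ^ i *
          (twoVar (PowerSeries.map (Int.castRingHom (ZMod p)) (E4 ^ 3))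
              (PowerSeries.map (Int.castRingHom (ZMod p)) Δ) +
            twoVar (PowerSeries.map (Int.castRingHom (ZMod p)) Δ)
              (PowerSeries.map (Int.castRingHom (ZMod p)) (E4 ^ 3))) ^ j) = 1 ∧
      ∀ m n : ℕ, (m < i ∨ (m = i ∧ n < i + j)) →
        MvPowerSeries.coeff (idx m n)
          ((twoVar (PowerSeries.map (Int.castRingHom (ZMod p)) Δ)
              (PowerSeries.map (Int.castRingHom (ZMod p)) Δ)) ^ i *
            (twoVar (PowerSeries.map (Int.castRingHom (ZMod p)) (E4 ^ 3))
                (PowerSeries.map (Int.castRingHom (ZMod p)) Δ) +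
              twoVar (PowerSeries.map (Int.castRingHom (ZMod p)) Δ)
                (PowerSeries.map (Int.castRingHom (ZMod p)) (E4 ^ 3))) ^ j) = 0 :=
  x12_y12_algebraically_independent_general p E4 E6 Δ hE4 hE6 hΔ
end
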